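/- arXiv:1311.3396 — 6 statements merged into one kernel-verified Lean document; each statement's English description precedes it below -/
import Mathlib

section
/- For an input-enabled probabilistic automaton, the lifted transition relation between distributions is left-decomposable: if μ = Σ_{i∈I} p_i·μ_i with I finite, p_i > 0, Σ_i p_i = 1, and μ --a--> ν, then ν can be written as Σ_{i∈I} p_i·ν_i with μ_i --a--> ν_i for every i ∈ I. -/
open Finset

structure ProbDist (S : Type) [Fintype S] where
  f : S → ℝ
  nonneg : ∀ s, 0 ≤ f s
  sum_one : ∑ s, f s = 1

/-- Probability assigned by a distribution to a set of states. -/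
noncomputable def ProbDist.pr {S : Type} [Fintype S] (μ : ProbDist S) (C : Set S) : ℝ :=
  ∑ s, C.indicator μ.f s

/-- μ(A) := Σ_{s : L s = A} μ(s). -/
noncomputable def pOf {S AP : Type} [Fintype S] (L : S → Finset AP) (μ : ProbDist S)
    (A : Finset AP) : ℝ :=
  μ.pr {s | L s = A}

/-- d_AP(μ,ν) := (1/2) Σ_{A ⊆ AP} |μ(A) − ν(A)|. -/
noncomputable def dAP {S AP : Type} [Fintype S] [Fintype AP] [DecidableEq AP]
    (L : S → Finset AP) (μ ν : ProbDist S) : ℝ :=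
  (1 / 2) * ∑ A : Finset AP, |pOf L μ A - pOf L ν A|

/-- A (Segala) probabilistic automaton, image-finite. -/
structure PA (S Act AP : Type) [Fintype S] where
  trans : S → Act → ProbDist S → Prop
  L : S → Finset AP
  imageFinite : ∀ s a, {μ | trans s a μ}.Finite

def PA.InputEnabled {S Act AP : Type} [Fintype S] (M : PA S Act AP) : Prop :=
  ∀ s a, ∃ μ, M.trans s a μ

noncomputable def PA.probOf {S Act AP : Type} [Fintype S] (M : PA S Act AP)
    (μ : ProbDist S) (A : Finset AP) : ℝ := pOf M.L μ A

/-- Combined transition s --a-->_P μ : μ is a convex combination of one-step successors. -/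
def Combined {S Act AP : Type} [Fintype S] (M : PA S Act AP) (s : S) (a : Act)
    (μ : ProbDist S) : Prop :=
  ∃ (n : ℕ) (p : Fin n → ℝ) (ν : Fin n → ProbDist S),
    (∀ i, 0 ≤ p i) ∧ (∑ i, p i = 1) ∧ (∀ i, M.trans s a (ν i)) ∧
    (∀ t, μ.f t = ∑ i, p i * (ν i).f t)

/-- Lifted transition μ --a--> μ' between distributions. -/
def Lifted {S Act AP : Type} [Fintype S] (M : PA S Act AP) (μ : ProbDist S) (a : Act)
    (μ' : ProbDist S) : Prop :=
  ∃ k : S → ProbDist S, (∀ s, 0 < μ.f s → Combined M s a (k s)) ∧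
    (∀ t, μ'.f t = ∑ s, μ.f s * (k s).f t)

/-- ProbDist S carries the topology inherited from ℝ^{|S|}. -/
noncomputable instance {S : Type} [Fintype S] : TopologicalSpace (ProbDist S) :=
  TopologicalSpace.induced (fun μ : ProbDist S => μ.f) inferInstance

/-!
Resolve the nondeterminism of `μ --a--> ν` by one combined transition `k s` per state. On the
support of `μ` it is given by the lifted transition; elsewhere input-enabledness supplies one,
and these states carry no mass in `μ`, so `ν` is unchanged. Then `ν = Σ_s μ(s) k(s)` is linear in
`μ`, and `ν_i := Σ_s μ_i(s) k(s)` is the required decomposition, since `k` resolves every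
`μ_i --a--> ν_i` as well.
-/

variable {S Act AP : Type} [Fintype S]

namespace ProbDist

theorem ext {μ ν : ProbDist S} (h : ∀ t, μ.f t = ν.f t) : μ = ν := by
  cases μ; cases ν
  congr
  exact funext h

noncomputable def bind (μ : ProbDist S) (k : S → ProbDist S) : ProbDist S where
  f t := ∑ s, μ.f s * (k s).f t
  nonneg t := sum_nonneg fun s _ => mul_nonneg (μ.nonneg s) ((k s).nonneg t)
  sum_one := by
    rw [sum_comm]
    simp only [← mul_sum, ProbDist.sum_one, mul_one, μ.sum_one]

theorem bind_f (μ : ProbDist S) (k : S → ProbDist S) (t : S) :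
    (μ.bind k).f t = ∑ s, μ.f s * (k s).f t :=
  rfl

theorem bind_f_of_f_eq_sum {I : Type} [Fintype I] (p : I → ℝ) (μ : I → ProbDist S)
    (μc : ProbDist S) (hμc : ∀ t, μc.f t = ∑ i, p i * (μ i).f t) (k : S → ProbDist S) (t : S) :
    (μc.bind k).f t = ∑ i, p i * ((μ i).bind k).f t := by
  simp only [bind_f, hμc, sum_mul, mul_sum, mul_assoc]
  exact sum_comm

end ProbDist

theorem Combined.of_trans {M : PA S Act AP} {s : S} {a : Act} {μ : ProbDist S}
    (h : M.trans s a μ) : Combined M s a μ :=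
  ⟨1, fun _ => 1, fun _ => μ, fun _ => zero_le_one, by simp, fun _ => h, fun t => by simp⟩

theorem Lifted.bind {M : PA S Act AP} {μ : ProbDist S} {a : Act} {k : S → ProbDist S}
    (hk : ∀ s, 0 < μ.f s → Combined M s a (k s)) : Lifted M μ a (μ.bind k) :=
  ⟨k, hk, fun _ => rfl⟩

theorem Lifted.exists_eq_bind {M : PA S Act AP} (hM : M.InputEnabled) {μ ν : ProbDist S}
    {a : Act} (h : Lifted M μ a ν) :
    ∃ k : S → ProbDist S, (∀ s, Combined M s a (k s)) ∧ ν = μ.bind k := by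
  classical
  obtain ⟨k, hk, hν⟩ := h
  choose d hd using fun s => hM s a
  refine ⟨fun s => if 0 < μ.f s then k s else d s, fun s => ?_, ?_⟩
  · dsimp only
    split_ifs with hs
    exacts [hk s hs, Combined.of_trans (hd s)]
  · refine ProbDist.ext fun t => ?_
    rw [hν, ProbDist.bind_f]
    refine sum_congr rfl fun s _ => ?_
    split_ifs with hs
    · rfl
    · simp [le_antisymm (not_lt.mp hs) (μ.nonneg s)]

theorem stmt3_general {S Act AP : Type} [Fintype S] (M : PA S Act AP) (hM : M.InputEnabled)
    {I : Type} [Fintype I] (p : I → ℝ)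
    (μ : I → ProbDist S) (a : Act) (μc ν : ProbDist S)
    (hμc : ∀ t, μc.f t = ∑ i, p i * (μ i).f t)
    (h : Lifted M μc a ν) :
    ∃ νi : I → ProbDist S, (∀ i, Lifted M (μ i) a (νi i)) ∧
      ∀ t, ν.f t = ∑ i, p i * (νi i).f t := by
  obtain ⟨k, hk, rfl⟩ := h.exists_eq_bind hM
  exact ⟨fun i => (μ i).bind k, fun i => Lifted.bind fun s _ => hk s,
    ProbDist.bind_f_of_f_eq_sum p μ μc hμc k⟩

theorem stmt3 {S Act AP : Type} [Fintype S] (M : PA S Act AP) (hM : M.InputEnabled)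
    {I : Type} [Fintype I] (p : I → ℝ) (hp : ∀ i, 0 < p i) (hp1 : ∑ i, p i = 1)
    (μ : I → ProbDist S) (a : Act) (μc ν : ProbDist S)
    (hμc : ∀ t, μc.f t = ∑ i, p i * (μ i).f t)
    (h : Lifted M μc a ν) :
    ∃ νi : I → ProbDist S, (∀ i, Lifted M (μ i) a (νi i)) ∧
      ∀ t, ν.f t = ∑ i, p i * (νi i).f t :=
  stmt3_general M hM p μ a μc ν hμc h
end

section
/- For an input-enabled probabilistic automaton with finite state set S, the lifted transition relation between distributions is continuous: if μ_i --a--> ν_i for all i, lim_i μ_i = μ and the sequence (ν_i) converges, then μ --a--> lim_i ν_i. -/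
open Finset

/-!
A combined transition from `s` under `a` is a point of the convex hull of the finitely many
one-step successors of `s`, a compact subset of the simplex. Input-enabledness lets every state,
also one of probability zero, be assigned such a target, so the graph of the lifted transition is
the image of the compact set `simplex × ∏ₛ hullₛ` under the continuous map
`(μ, g) ↦ (μ, ∑ₛ μ(s) • g s)`. Hence the graph is compact, in particular closed, which is the
claimed continuity.
-/

open Set Filter Topology

namespace ProbDist

variable {S : Type} [Fintype S]

theorem continuous_f : Continuous (fun μ : ProbDist S => μ.f) :=
  continuous_induced_dom

theorem f_mem_stdSimplex (μ : ProbDist S) : μ.f ∈ stdSimplex ℝ S :=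
  ⟨μ.nonneg, μ.sum_one⟩

def ofStdSimplex (x : S → ℝ) (hx : x ∈ stdSimplex ℝ S) : ProbDist S :=
  ⟨x, hx.1, hx.2⟩

end ProbDist

namespace PA

variable {S Act AP : Type} [Fintype S] (M : PA S Act AP)

def combinedTargets (s : S) (a : Act) : Set (S → ℝ) :=
  convexHull ℝ (ProbDist.f '' {μ | M.trans s a μ})

theorem combined_iff_f_mem_combinedTargets (s : S) (a : Act) (μ : ProbDist S) :
    Combined M s a μ ↔ μ.f ∈ M.combinedTargets s a := by
  rw [combinedTargets, mem_convexHull_iff_exists_fintype]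
  constructor
  · rintro ⟨n, p, ν, hp₀, hp₁, htrans, hμ⟩
    refine ⟨Fin n, inferInstance, p, fun i => (ν i).f, hp₀, hp₁,
      fun i => ⟨ν i, htrans i, rfl⟩, ?_⟩
    ext t
    simp [hμ]
  · rintro ⟨ι, _, w, z, hw₀, hw₁, hz, hsum⟩
    choose ν hν hνz using hz
    let e := (Fintype.equivFin ι).symm
    refine ⟨Fintype.card ι, w ∘ e, ν ∘ e, fun i => hw₀ _, ?_, fun i => hν _, fun t => ?_⟩
    · rw [← hw₁]
      exact Fintype.sum_equiv e _ _ fun _ => rfl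
    · rw [← hsum, Finset.sum_apply]
      exact (Fintype.sum_equiv e _ _ fun i => by simp [hνz]).symm

theorem isCompact_combinedTargets (s : S) (a : Act) : IsCompact (M.combinedTargets s a) :=
  ((M.imageFinite s a).image _).isCompact_convexHull (𝕜 := ℝ)

theorem combinedTargets_subset_stdSimplex (s : S) (a : Act) :
    M.combinedTargets s a ⊆ stdSimplex ℝ S :=
  convexHull_min (image_subset_iff.2 fun μ _ => μ.f_mem_stdSimplex) (convex_stdSimplex ℝ S)

theorem f_mem_combinedTargets {s : S} {a : Act} {μ : ProbDist S} (hμ : M.trans s a μ) :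
    μ.f ∈ M.combinedTargets s a :=
  subset_convexHull ℝ _ ⟨μ, hμ, rfl⟩

def liftedGraph (a : Act) : Set ((S → ℝ) × (S → ℝ)) :=
  (fun p : (S → ℝ) × (S → S → ℝ) => (p.1, fun t => ∑ s, p.1 s * p.2 s t)) ''
    (stdSimplex ℝ S ×ˢ pi univ fun s => M.combinedTargets s a)

theorem isCompact_liftedGraph (a : Act) : IsCompact (M.liftedGraph a) :=
  ((isCompact_stdSimplex ℝ S).prod
    (isCompact_univ_pi fun s => M.isCompact_combinedTargets s a)).image (by fun_prop)

theorem lifted_iff_mem_liftedGraph (hM : M.InputEnabled) (μ ν : ProbDist S) (a : Act) :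
    Lifted M μ a ν ↔ (μ.f, ν.f) ∈ M.liftedGraph a := by
  classical
  constructor
  · rintro ⟨k, hk, hν⟩
    -- states of probability zero get an arbitrary one-step successor as target
    choose d hd using fun s => hM s a
    let g : S → S → ℝ := fun s => if 0 < μ.f s then (k s).f else (d s).f
    have hg : ∀ s, g s ∈ M.combinedTargets s a := fun s => by
      by_cases hs : 0 < μ.f s
      · simpa [g, hs] using (M.combined_iff_f_mem_combinedTargets s a _).1 (hk s hs)
      · simpa [g, hs] using M.f_mem_combinedTargets (hd s)
    refine ⟨(μ.f, g), ⟨μ.f_mem_stdSimplex, fun s _ => hg s⟩, Prod.ext rfl (funext fun t => ?_)⟩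
    show ∑ s, μ.f s * g s t = ν.f t
    rw [hν t]
    refine Finset.sum_congr rfl fun s _ => ?_
    by_cases hs : 0 < μ.f s
    · simp [g, hs]
    · simp [le_antisymm (not_lt.1 hs) (μ.nonneg s)]
  · rintro ⟨⟨m, g⟩, ⟨-, hg⟩, hmg⟩
    obtain ⟨rfl, hgν⟩ := Prod.mk.inj hmg
    have hg' : ∀ s, g s ∈ M.combinedTargets s a := fun s => hg s trivial
    refine ⟨fun s => .ofStdSimplex (g s) (M.combinedTargets_subset_stdSimplex s a (hg' s)),
      fun s _ => (M.combined_iff_f_mem_combinedTargets s a _).2 (hg' s),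
      fun t => (congrFun hgν t).symm⟩

theorem isClosed_setOf_lifted (hM : M.InputEnabled) (a : Act) :
    IsClosed {p : ProbDist S × ProbDist S | Lifted M p.1 a p.2} := by
  have hgraph : {p : ProbDist S × ProbDist S | Lifted M p.1 a p.2} =
      (fun p : ProbDist S × ProbDist S => (p.1.f, p.2.f)) ⁻¹' M.liftedGraph a :=
    Set.ext fun p => M.lifted_iff_mem_liftedGraph hM p.1 p.2 a
  rw [hgraph]
  exact (M.isCompact_liftedGraph a).isClosed.preimage
    ((ProbDist.continuous_f.comp continuous_fst).prodMk
      (ProbDist.continuous_f.comp continuous_snd))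

end PA

theorem stmt4 {S Act AP : Type} [Fintype S] (M : PA S Act AP) (hM : M.InputEnabled)
    (μs νs : ℕ → ProbDist S) (μ ν : ProbDist S) (a : Act)
    (h : ∀ i, Lifted M (μs i) a (νs i))
    (hμ : Filter.Tendsto μs Filter.atTop (nhds μ))
    (hν : Filter.Tendsto νs Filter.atTop (nhds ν)) :
    Lifted M μ a ν :=
  (M.isClosed_setOf_lifted hM a).mem_of_tendsto (hμ.prodMk_nhds hν) (Eventually.of_forall h)
end

section
/- For an input-enabled probabilistic automaton, distribution-based bisimilarity ∼ is linear: if I is finite, (p_i) is a probability distribution on I, and μ_i ∼ ν_i for each i, then Σ_i p_i·μ_i ∼ Σ_i p_i·ν_i. -/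
open Finset

/-- Distribution-based bisimulation. -/
def IsBisim {S Act AP : Type} [Fintype S] (M : PA S Act AP)
    (R : ProbDist S → ProbDist S → Prop) : Prop :=
  Symmetric R ∧ ∀ μ ν, R μ ν →
    (∀ A : Finset AP, M.probOf μ A = M.probOf ν A) ∧
    (∀ a μ', Lifted M μ a μ' → ∃ ν', Lifted M ν a ν' ∧ R μ' ν')

/-- Distribution-based bisimilarity. -/
def Bisimilar {S Act AP : Type} [Fintype S] (M : PA S Act AP) (μ ν : ProbDist S) : Prop :=
  ∃ R, IsBisim M R ∧ R μ ν

/-!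
A bisimilar pair of mixtures is obtained by mixing bisimilar pairs, so it suffices to show that
the relation "`α = ∑ qᵢ αᵢ` and `β = ∑ qᵢ βᵢ` with `αᵢ ∼ βᵢ`" is a bisimulation. Labels are
linear in the distribution. A lifted transition of `∑ qᵢ αᵢ` is given by a kernel, which by
input-enabledness may be taken to be defined at every state; applying it to each `αᵢ` splits the
transition into transitions `αᵢ --a--> αᵢ'`. Bisimilarity matches these by `βᵢ --a--> βᵢ'`, and
these recombine into a transition of `∑ qᵢ βᵢ` to `∑ qᵢ βᵢ'`, since combined transitions are
closed under convex combinations.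
-/

section

variable {S Act AP : Type} [Fintype S]

namespace ProbDist

def IsMix {I : Type} [Fintype I] (q : I → ℝ) (α : I → ProbDist S) (β : ProbDist S) : Prop :=
  ∀ t, β.f t = ∑ i, q i * (α i).f t

noncomputable def mix {I : Type} [Fintype I] (q : I → ℝ) (hq : ∀ i, 0 ≤ q i)
    (hq1 : ∑ i, q i = 1) (α : I → ProbDist S) : ProbDist S where
  f t := ∑ i, q i * (α i).f t
  nonneg t := sum_nonneg fun i _ => mul_nonneg (hq i) ((α i).nonneg t)
  sum_one := by
    rw [sum_comm, ← hq1]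
    exact sum_congr rfl fun i _ => by rw [← mul_sum, (α i).sum_one, mul_one]

lemma isMix_mix {I : Type} [Fintype I] (q : I → ℝ) (hq : ∀ i, 0 ≤ q i)
    (hq1 : ∑ i, q i = 1) (α : I → ProbDist S) : IsMix q α (mix q hq hq1 α) :=
  fun _ => rfl

namespace IsMix

variable {I : Type} [Fintype I] {q : I → ℝ} {α : I → ProbDist S} {β : ProbDist S}

lemma pr (h : IsMix q α β) (C : Set S) : β.pr C = ∑ i, q i * (α i).pr C := by
  classical
  simp only [ProbDist.pr, mul_sum]
  rw [sum_comm]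
  refine sum_congr rfl fun s _ => ?_
  by_cases hs : s ∈ C <;> simp [hs, h s]

lemma sigma {κ : I → Type} [∀ i, Fintype (κ i)] {w : ∀ i, κ i → ℝ}
    {ρ : ∀ i, κ i → ProbDist S} (h : IsMix q α β) (hα : ∀ i, IsMix (w i) (ρ i) (α i)) :
    IsMix (fun x : Σ i, κ i => q x.1 * w x.1 x.2) (fun x => ρ x.1 x.2) β := by
  intro t
  rw [h t, Fintype.sum_sigma]
  refine sum_congr rfl fun i _ => ?_
  rw [hα i t, mul_sum]
  exact sum_congr rfl fun j _ => (mul_assoc _ _ _).symm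

lemma comp {k : S → ProbDist S} {α' : I → ProbDist S} {β' : ProbDist S} (h : IsMix q α β)
    (hβ' : IsMix β.f k β') (hα' : ∀ i, IsMix (α i).f k (α' i)) : IsMix q α' β' := by
  intro t
  simp only [hβ' t, hα' _ t, h _, sum_mul, mul_sum]
  rw [sum_comm]
  exact sum_congr rfl fun i _ => sum_congr rfl fun s _ => mul_assoc _ _ _

lemma mul_eq_zero_of_apply_eq_zero (hq : ∀ i, 0 ≤ q i) (h : IsMix q α β) {s : S} (hs : β.f s = 0)
    (i : I) : q i * (α i).f s = 0 :=
  (sum_eq_zero_iff_of_nonneg fun i _ => mul_nonneg (hq i) ((α i).nonneg s)).mp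
    (by rw [← h s, hs]) i (mem_univ i)

end IsMix

end ProbDist

open ProbDist

namespace Combined

variable {M : PA S Act AP} {s : S} {a : Act} {μ : ProbDist S}

lemma of_isMix {ι : Type} [Fintype ι] {p : ι → ℝ} {ν : ι → ProbDist S} (hp : ∀ i, 0 ≤ p i)
    (hp1 : ∑ i, p i = 1) (hν : ∀ i, M.trans s a (ν i)) (h : IsMix p ν μ) :
    Combined M s a μ := by
  let e := (Fintype.equivFin ι).symm
  refine ⟨Fintype.card ι, p ∘ e, ν ∘ e, fun j => hp (e j), ?_, fun j => hν (e j), fun t => ?_⟩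
  · rw [← hp1]; exact e.sum_comp p
  · rw [h t]; exact (e.sum_comp fun i => p i * (ν i).f t).symm

lemma of_trans_s5 (h : M.trans s a μ) : Combined M s a μ :=
  of_isMix (p := fun _ : Unit => 1) (fun _ => zero_le_one) (by simp) (fun _ => h)
    fun t => by simp

lemma of_convex {ι : Type} [Fintype ι] {w : ι → ℝ} {χ : ι → ProbDist S} (hw : ∀ i, 0 ≤ w i)
    (hw1 : ∑ i, w i = 1) (hχ : ∀ i, Combined M s a (χ i)) (h : IsMix w χ μ) :
    Combined M s a μ := by
  choose n q ρ hq hq1 hρ hχq using hχ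
  refine of_isMix (fun x : Σ i, Fin (n i) => mul_nonneg (hw x.1) (hq x.1 x.2)) ?_
    (fun x => hρ x.1 x.2) (h.sigma hχq)
  rw [Fintype.sum_sigma, ← hw1]
  exact sum_congr rfl fun i _ => by dsimp only; rw [← mul_sum, hq1 i, mul_one]

end Combined

namespace Lifted

variable {M : PA S Act AP} {a : Act}

-- Off the support of `μ` the kernel is unconstrained, so input-enabledness lets us fill it in.
lemma exists_total_kernel (hM : M.InputEnabled) {μ μ' : ProbDist S} (h : Lifted M μ a μ') :
    ∃ k : S → ProbDist S, (∀ s, Combined M s a (k s)) ∧ IsMix μ.f k μ' := by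
  classical
  obtain ⟨k, hk, hμ'⟩ := h
  choose d hd using fun s => hM s a
  refine ⟨fun s => if 0 < μ.f s then k s else d s, fun s => ?_, fun t => ?_⟩
  · dsimp only
    split_ifs with hs
    exacts [hk s hs, Combined.of_trans_s5 (hd s)]
  · rw [hμ' t]
    refine sum_congr rfl fun s _ => ?_
    dsimp only
    split_ifs with hs
    · rfl
    · rw [le_antisymm (not_lt.mp hs) (μ.nonneg s), zero_mul, zero_mul]

variable {I : Type} [Fintype I] {q : I → ℝ} {α : I → ProbDist S} {β : ProbDist S}

lemma exists_split (hM : M.InputEnabled) (h : IsMix q α β) {β' : ProbDist S}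
    (hβ : Lifted M β a β') :
    ∃ α' : I → ProbDist S, (∀ i, Lifted M (α i) a (α' i)) ∧ IsMix q α' β' := by
  obtain ⟨k, hk, hβ'⟩ := hβ.exists_total_kernel hM
  exact ⟨fun i => mix (α i).f (α i).nonneg (α i).sum_one k,
    fun i => ⟨k, fun s _ => hk s, isMix_mix _ _ _ _⟩, h.comp hβ' fun i => isMix_mix _ _ _ _⟩

lemma exists_combine (hM : M.InputEnabled) (hq : ∀ i, 0 ≤ q i) {α' : I → ProbDist S}
    (hα : ∀ i, Lifted M (α i) a (α' i)) (h : IsMix q α β) :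
    ∃ β', Lifted M β a β' ∧ IsMix q α' β' := by
  classical
  choose K hK hα' using fun i => (hα i).exists_total_kernel hM
  have hw (s : S) (hs : 0 < β.f s) (i : I) : 0 ≤ q i * (α i).f s / β.f s :=
    div_nonneg (mul_nonneg (hq i) ((α i).nonneg s)) hs.le
  have hw1 (s : S) (hs : 0 < β.f s) : ∑ i, q i * (α i).f s / β.f s = 1 := by
    rw [← sum_div, ← h s, div_self hs.ne']
  -- at a state in the support of `β`, mix the kernels `K i` in proportion to `q i * α i s`
  let k : S → ProbDist S := fun s =>
    if hs : 0 < β.f s then mix _ (hw s hs) (hw1 s hs) fun i => K i s else β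
  have hk (s : S) (t : S) : β.f s * (k s).f t = ∑ i, q i * ((α i).f s * (K i s).f t) := by
    by_cases hs : 0 < β.f s
    · simp only [k, dif_pos hs, mix, mul_sum]
      refine sum_congr rfl fun i _ => ?_
      field_simp
    · have hs0 := le_antisymm (not_lt.mp hs) (β.nonneg s)
      rw [hs0, zero_mul]
      exact (sum_eq_zero fun i _ => by
        rw [← mul_assoc, h.mul_eq_zero_of_apply_eq_zero hq hs0 i, zero_mul]).symm
  refine ⟨mix β.f β.nonneg β.sum_one k, ⟨k, fun s hs => ?_, isMix_mix _ _ _ _⟩, fun t => ?_⟩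
  · simp only [k, dif_pos hs]
    exact Combined.of_convex (hw s hs) (hw1 s hs) (fun i => hK i s) (isMix_mix _ _ _ _)
  · simp only [mix, hk, hα' _ t, mul_sum]
    exact sum_comm

end Lifted

namespace Bisimilar

variable {M : PA S Act AP} {μ ν : ProbDist S}

lemma symm (h : Bisimilar M μ ν) : Bisimilar M ν μ :=
  let ⟨R, hR, hμν⟩ := h
  ⟨R, hR, hR.1 hμν⟩

lemma probOf_eq (h : Bisimilar M μ ν) (A : Finset AP) : M.probOf μ A = M.probOf ν A :=
  let ⟨_, hR, hμν⟩ := h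
  ((hR.2 _ _ hμν).1 A)

lemma exists_lifted (h : Bisimilar M μ ν) {a : Act} {μ' : ProbDist S} (hμ : Lifted M μ a μ') :
    ∃ ν', Lifted M ν a ν' ∧ Bisimilar M μ' ν' :=
  let ⟨R, hR, hμν⟩ := h
  let ⟨ν', hν, hR'⟩ := (hR.2 _ _ hμν).2 a μ' hμ
  ⟨ν', hν, R, hR, hR'⟩

end Bisimilar

def BisimilarMix (M : PA S Act AP) (I : Type) [Fintype I] (α β : ProbDist S) : Prop :=
  ∃ (q : I → ℝ) (α' β' : I → ProbDist S), (∀ i, 0 ≤ q i) ∧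
    (∀ i, Bisimilar M (α' i) (β' i)) ∧ IsMix q α' α ∧ IsMix q β' β

lemma isBisim_bisimilarMix {M : PA S Act AP} (hM : M.InputEnabled) (I : Type) [Fintype I] :
    IsBisim M (BisimilarMix M I) := by
  refine ⟨fun α β ⟨q, α', β', hq, hαβ, hα, hβ⟩ => ⟨q, β', α', hq, fun i => (hαβ i).symm, hβ, hα⟩,
    fun α β ⟨q, α', β', hq, hαβ, hα, hβ⟩ => ⟨fun A => ?_, fun a αs hαs => ?_⟩⟩
  · simp only [PA.probOf, pOf, hα.pr, hβ.pr]
    exact sum_congr rfl fun i _ => congrArg (q i * ·) ((hαβ i).probOf_eq A)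
  · obtain ⟨αs', hαs', hmixα⟩ := Lifted.exists_split hM hα hαs
    choose βs' hβs' hαβs using fun i => (hαβ i).exists_lifted (hαs' i)
    obtain ⟨βs, hβs, hmixβ⟩ := Lifted.exists_combine hM hq hβs' hβ
    exact ⟨βs, hβs, q, αs', βs', hq, hαβs, hmixα, hmixβ⟩

end

theorem stmt5_general {S Act AP : Type} [Fintype S] (M : PA S Act AP) (hM : M.InputEnabled)
    {I : Type} [Fintype I] (p : I → ℝ) (hp : ∀ i, 0 ≤ p i)
    (μ ν : I → ProbDist S) (h : ∀ i, Bisimilar M (μ i) (ν i))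
    (μc νc : ProbDist S) (hμc : ∀ t, μc.f t = ∑ i, p i * (μ i).f t)
    (hνc : ∀ t, νc.f t = ∑ i, p i * (ν i).f t) :
    Bisimilar M μc νc :=
  ⟨BisimilarMix M I, isBisim_bisimilarMix hM I, p, μ, ν, hp, h, hμc, hνc⟩

theorem stmt5 {S Act AP : Type} [Fintype S] (M : PA S Act AP) (hM : M.InputEnabled)
    {I : Type} [Fintype I] (p : I → ℝ) (hp : ∀ i, 0 ≤ p i) (hp1 : ∑ i, p i = 1)
    (μ ν : I → ProbDist S) (h : ∀ i, Bisimilar M (μ i) (ν i))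
    (μc νc : ProbDist S) (hμc : ∀ t, μc.f t = ∑ i, p i * (μ i).f t)
    (hνc : ∀ t, νc.f t = ∑ i, p i * (ν i).f t) :
    Bisimilar M μc νc :=
  stmt5_general M hM p hp μ ν h μc νc hμc hνc
end

section
/- The family of approximate bisimilarity relations satisfies a triangle-type property: if μ ∼_{ε₁} ν and ν ∼_{ε₂} ω then μ ∼_{ε₁+ε₂} ω. -/
open Finset

/-- A (discounted) approximate bisimulation: a family of symmetric relations. -/
def IsApproxBisim {S Act AP : Type} [Fintype S] [Fintype AP] [DecidableEq AP]
    (M : PA S Act AP) (γ : ℝ) (R : ℝ → ProbDist S → ProbDist S → Prop) : Prop :=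
  (∀ ε, Symmetric (R ε)) ∧ ∀ ε μ ν, R ε μ ν →
    dAP M.L μ ν ≤ ε ∧
    ∀ a μ', Lifted M μ a μ' → ∃ ν', Lifted M ν a ν' ∧ R (ε / γ) μ' ν'

/-- μ ∼_ε ν. -/
def ApproxBisimilar {S Act AP : Type} [Fintype S] [Fintype AP] [DecidableEq AP]
    (M : PA S Act AP) (γ : ℝ) (ε : ℝ) (μ ν : ProbDist S) : Prop :=
  ∃ R, IsApproxBisim M γ R ∧ R ε μ ν

/-- The bisimulation distance D_b(μ,ν) = inf {ε ≥ 0 : μ ∼_ε ν}. -/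
noncomputable def Db {S Act AP : Type} [Fintype S] [Fintype AP] [DecidableEq AP]
    (M : PA S Act AP) (γ : ℝ) (μ ν : ProbDist S) : ℝ :=
  sInf {ε | 0 ≤ ε ∧ ApproxBisimilar M γ ε μ ν}

/-! The relational composite of ∼ with itself, with the tolerances added, is again an approximate
bisimulation: the label distance obeys the triangle inequality, and a lifted step of the first
distribution is matched through the intermediate one, whose tolerances both scale by `1/γ`. -/

lemma dAP_triangle {S AP : Type} [Fintype S] [Fintype AP] [DecidableEq AP]
    (L : S → Finset AP) (μ ν ω : ProbDist S) :
    dAP L μ ω ≤ dAP L μ ν + dAP L ν ω := by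
  unfold dAP
  rw [← mul_add, ← Finset.sum_add_distrib]
  gcongr with A
  exact abs_sub_le _ _ _

section Composite

variable {S Act AP : Type} [Fintype S] [Fintype AP] [DecidableEq AP] {M : PA S Act AP} {γ : ℝ}

lemma ApproxBisimilar.symm {ε : ℝ} {μ ν : ProbDist S} (h : ApproxBisimilar M γ ε μ ν) :
    ApproxBisimilar M γ ε ν μ :=
  let ⟨R, hR, hμν⟩ := h
  ⟨R, hR, hR.1 ε hμν⟩

variable (M γ) in
def ApproxBisimilarComp (ε : ℝ) (μ ω : ProbDist S) : Prop :=
  ∃ δ₁ δ₂ ν, ε = δ₁ + δ₂ ∧ ApproxBisimilar M γ δ₁ μ ν ∧ ApproxBisimilar M γ δ₂ ν ω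

lemma ApproxBisimilarComp.symm {ε : ℝ} {μ ω : ProbDist S} (h : ApproxBisimilarComp M γ ε μ ω) :
    ApproxBisimilarComp M γ ε ω μ :=
  let ⟨δ₁, δ₂, ν, hε, hμν, hνω⟩ := h
  ⟨δ₂, δ₁, ν, hε.trans (add_comm _ _), hνω.symm, hμν.symm⟩

lemma ApproxBisimilarComp.dAP_le {ε : ℝ} {μ ω : ProbDist S}
    (h : ApproxBisimilarComp M γ ε μ ω) : dAP M.L μ ω ≤ ε := by
  obtain ⟨δ₁, δ₂, ν, rfl, ⟨R₁, hR₁, hμν⟩, ⟨R₂, hR₂, hνω⟩⟩ := h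
  calc dAP M.L μ ω ≤ dAP M.L μ ν + dAP M.L ν ω := dAP_triangle _ _ _ _
    _ ≤ δ₁ + δ₂ := add_le_add (hR₁.2 δ₁ μ ν hμν).1 (hR₂.2 δ₂ ν ω hνω).1

lemma ApproxBisimilarComp.exists_lifted {ε : ℝ} {μ ω μ' : ProbDist S} {a : Act}
    (h : ApproxBisimilarComp M γ ε μ ω) (hμ' : Lifted M μ a μ') :
    ∃ ω', Lifted M ω a ω' ∧ ApproxBisimilarComp M γ (ε / γ) μ' ω' := by
  obtain ⟨δ₁, δ₂, ν, rfl, ⟨R₁, hR₁, hμν⟩, ⟨R₂, hR₂, hνω⟩⟩ := h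
  obtain ⟨ν', hν', hμν'⟩ := (hR₁.2 δ₁ μ ν hμν).2 a μ' hμ'
  obtain ⟨ω', hω', hνω'⟩ := (hR₂.2 δ₂ ν ω hνω).2 a ν' hν'
  exact ⟨ω', hω', δ₁ / γ, δ₂ / γ, ν', add_div _ _ _, ⟨R₁, hR₁, hμν'⟩, ⟨R₂, hR₂, hνω'⟩⟩

lemma isApproxBisim_approxBisimilarComp : IsApproxBisim M γ (ApproxBisimilarComp M γ) :=
  ⟨fun _ _ _ h => h.symm, fun _ _ _ h => ⟨h.dAP_le, fun _ _ => h.exists_lifted⟩⟩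

end Composite

theorem stmt8_general {S Act AP : Type} [Fintype S] [Fintype AP] [DecidableEq AP]
    (M : PA S Act AP) (γ : ℝ)
    {ε₁ ε₂ : ℝ} {μ ν ω : ProbDist S}
    (h1 : ApproxBisimilar M γ ε₁ μ ν) (h2 : ApproxBisimilar M γ ε₂ ν ω) :
    ApproxBisimilar M γ (ε₁ + ε₂) μ ω :=
  ⟨ApproxBisimilarComp M γ, isApproxBisim_approxBisimilarComp, ε₁, ε₂, ν, rfl, h1, h2⟩

theorem stmt8 {S Act AP : Type} [Fintype S] [Fintype AP] [DecidableEq AP]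
    (M : PA S Act AP) (hM : M.InputEnabled) (γ : ℝ) (hγ0 : 0 < γ) (hγ1 : γ ≤ 1)
    {ε₁ ε₂ : ℝ} {μ ν ω : ProbDist S}
    (h1 : ApproxBisimilar M γ ε₁ μ ν) (h2 : ApproxBisimilar M γ ε₂ ν ω) :
    ApproxBisimilar M γ (ε₁ + ε₂) μ ω :=
  stmt8_general M γ h1 h2
end

section
/- The least fixed point metric is bounded by the coinductive bisimulation distance: D_f ≤ D_b, i.e., for all n ≥ 0 and all distributions μ, ν in an input-enabled probabilistic automaton, F^n(𝟎)(μ,ν) ≤ D_b(μ,ν). -/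
open Finset

/-- The metric functional F. -/
noncomputable def FF {S Act AP : Type} [Fintype S] [Fintype AP] [DecidableEq AP]
    (M : PA S Act AP) (γ : ℝ) (d : ProbDist S → ProbDist S → ℝ) (μ ν : ProbDist S) : ℝ :=
  max (dAP M.L μ ν) (⨆ a : Act,
    max (sSup ((fun μ' => sInf ((fun ν' => γ * d μ' ν') '' {x | Lifted M ν a x})) '' {x | Lifted M μ a x}))
        (sSup ((fun ν' => sInf ((fun μ' => γ * d μ' ν') '' {x | Lifted M μ a x})) '' {x | Lifted M ν a x})))

section Aux

variable {S Act AP : Type} [Fintype S] [Fintype Act] [Fintype AP] [DecidableEq AP]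

lemma existsLifted (M : PA S Act AP) (hM : M.InputEnabled) (μ : ProbDist S) (a : Act) :
    ∃ μ', Lifted M μ a μ' := by
  classical
  set k : S → ProbDist S := fun s => (hM s a).choose with hk
  refine ⟨⟨fun t => ∑ s, μ.f s * (k s).f t, ?_, ?_⟩, k, ?_, fun t => rfl⟩
  · intro t
    exact Finset.sum_nonneg fun s _ => mul_nonneg (μ.nonneg s) ((k s).nonneg t)
  · rw [Finset.sum_comm]
    simp [← Finset.mul_sum, (k _).sum_one, μ.sum_one]
  · intro s _
    exact ⟨1, fun _ => 1, fun _ => k s, fun _ => zero_le_one, by simp,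
      fun _ => (hM s a).choose_spec, by simp⟩

lemma pOf_nonneg (L : S → Finset AP) (μ : ProbDist S) (A : Finset AP) : 0 ≤ pOf L μ A :=
  Finset.sum_nonneg fun s _ => Set.indicator_nonneg (fun s _ => μ.nonneg s) s

lemma sum_pOf (L : S → Finset AP) (μ : ProbDist S) : ∑ A : Finset AP, pOf L μ A = 1 := by
  classical
  unfold pOf ProbDist.pr
  rw [Finset.sum_comm]
  have : ∀ s : S, ∑ A : Finset AP, ({s | L s = A} : Set S).indicator μ.f s = μ.f s := by
    intro s
    have h : ∀ A : Finset AP, ({s | L s = A} : Set S).indicator μ.f s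
        = if L s = A then μ.f s else 0 := by
      intro A
      by_cases h : L s = A <;> simp [Set.indicator, h]
    simp only [h]
    simp
  simp only [this, μ.sum_one]

lemma dAP_nonneg (L : S → Finset AP) (μ ν : ProbDist S) : 0 ≤ dAP L μ ν :=
  mul_nonneg (by norm_num) (Finset.sum_nonneg fun A _ => abs_nonneg _)

lemma dAP_le_one (L : S → Finset AP) (μ ν : ProbDist S) : dAP L μ ν ≤ 1 := by
  unfold dAP
  have h : ∑ A : Finset AP, |pOf L μ A - pOf L ν A| ≤ 2 := by
    calc ∑ A : Finset AP, |pOf L μ A - pOf L ν A|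
        ≤ ∑ A : Finset AP, (pOf L μ A + pOf L ν A) := by
          refine Finset.sum_le_sum fun A _ => ?_
          calc |pOf L μ A - pOf L ν A| ≤ |pOf L μ A| + |pOf L ν A| := abs_sub _ _
            _ = pOf L μ A + pOf L ν A := by
                rw [abs_of_nonneg (pOf_nonneg L μ A), abs_of_nonneg (pOf_nonneg L ν A)]
      _ = 2 := by rw [Finset.sum_add_distrib, sum_pOf, sum_pOf]; norm_num
  linarith

lemma Fiter_nonneg (M : PA S Act AP) (γ : ℝ) (n : ℕ) (μ ν : ProbDist S) :
    0 ≤ (FF M γ)^[n] (fun _ _ => (0 : ℝ)) μ ν := by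
  cases n with
  | zero => simp
  | succ n =>
      rw [Function.iterate_succ_apply']
      exact le_trans (dAP_nonneg M.L μ ν) (le_max_left _ _)

lemma mySup_le {α : Type} (P : α → Prop) (g : α → ℝ) (a : ℝ) (ha : 0 ≤ a)
    (h : ∀ x, P x → g x ≤ a) : sSup (g '' {y | P y}) ≤ a :=
  Real.sSup_le (by rintro _ ⟨x, hx, rfl⟩; exact h x hx) ha

lemma myInf_le {α : Type} (P : α → Prop) (g : α → ℝ) (hg : ∀ x, 0 ≤ g x) (x₀ : α)
    (hx₀ : P x₀) : sInf (g '' {y | P y}) ≤ g x₀ :=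
  csInf_le ⟨0, by rintro _ ⟨x, _, rfl⟩; exact hg x⟩ ⟨x₀, hx₀, rfl⟩

lemma key (M : PA S Act AP) (γ : ℝ) (hγ0 : 0 < γ) (n : ℕ) :
    ∀ ε (μ ν : ProbDist S), 0 ≤ ε → ApproxBisimilar M γ ε μ ν →
      (FF M γ)^[n] (fun _ _ => (0 : ℝ)) μ ν ≤ ε := by
  induction n with
  | zero => intro ε μ ν hε _; simpa using hε
  | succ n ih =>
      intro ε μ ν hε hbis
      obtain ⟨R, hR, hRμν⟩ := hbis
      have hεγ : (0:ℝ) ≤ ε / γ := div_nonneg hε hγ0.le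
      rw [Function.iterate_succ_apply']
      unfold FF
      refine max_le (hR.2 ε μ ν hRμν).1 (Real.iSup_le (fun a => max_le ?_ ?_) hε)
      · refine mySup_le _ _ ε hε (fun μ' hμ' => ?_)
        obtain ⟨ν₀, hν₀, hR'⟩ := (hR.2 ε μ ν hRμν).2 a μ' hμ'
        have h1 : sInf ((fun ν' =>
            γ * (FF M γ)^[n] (fun _ _ => (0:ℝ)) μ' ν') '' {x | Lifted M ν a x}) ≤
            γ * (FF M γ)^[n] (fun _ _ => (0:ℝ)) μ' ν₀ :=
          myInf_le _ _ (fun x => mul_nonneg hγ0.le (Fiter_nonneg M γ n μ' x)) ν₀ hν₀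
        refine h1.trans ?_
        have h2 := ih (ε / γ) μ' ν₀ hεγ ⟨R, hR, hR'⟩
        calc γ * (FF M γ)^[n] (fun _ _ => (0:ℝ)) μ' ν₀ ≤ γ * (ε / γ) :=
              mul_le_mul_of_nonneg_left h2 hγ0.le
          _ = ε := by field_simp
      · refine mySup_le _ _ ε hε (fun ν' hν' => ?_)
        have hRνμ : R ε ν μ := hR.1 ε hRμν
        obtain ⟨μ₀, hμ₀, hR'⟩ := (hR.2 ε ν μ hRνμ).2 a ν' hν'
        have hR'' : R (ε / γ) μ₀ ν' := hR.1 (ε / γ) hR'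
        have h1 : sInf ((fun μ' =>
            γ * (FF M γ)^[n] (fun _ _ => (0:ℝ)) μ' ν') '' {x | Lifted M μ a x}) ≤
            γ * (FF M γ)^[n] (fun _ _ => (0:ℝ)) μ₀ ν' :=
          myInf_le _ _ (fun x => mul_nonneg hγ0.le (Fiter_nonneg M γ n x ν')) μ₀ hμ₀
        refine h1.trans ?_
        have h2 := ih (ε / γ) μ₀ ν' hεγ ⟨R, hR, hR''⟩
        calc γ * (FF M γ)^[n] (fun _ _ => (0:ℝ)) μ₀ ν' ≤ γ * (ε / γ) :=
              mul_le_mul_of_nonneg_left h2 hγ0.le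
          _ = ε := by field_simp

lemma one_mem (M : PA S Act AP) (hM : M.InputEnabled) (γ : ℝ) (hγ0 : 0 < γ) (hγ1 : γ ≤ 1)
    (μ ν : ProbDist S) : ApproxBisimilar M γ 1 μ ν := by
  refine ⟨fun ε _ _ => 1 ≤ ε, ⟨fun ε x y h => h, ?_⟩, le_refl 1⟩
  intro ε μ' ν' hε1
  refine ⟨(dAP_le_one M.L μ' ν').trans hε1, ?_⟩
  intro a ρ _
  obtain ⟨ρ', hρ'⟩ := existsLifted M hM ν' a
  exact ⟨ρ', hρ', (one_le_div hγ0).mpr (hγ1.trans hε1)⟩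

end Aux

theorem stmt16 {S Act AP : Type} [Fintype S] [Fintype Act] [Fintype AP] [DecidableEq AP]
    (M : PA S Act AP) (hM : M.InputEnabled) (γ : ℝ) (hγ0 : 0 < γ) (hγ1 : γ ≤ 1)
    (n : ℕ) (μ ν : ProbDist S) :
    (FF M γ)^[n] (fun _ _ => (0 : ℝ)) μ ν ≤ Db M γ μ ν := by
  refine le_csInf ⟨1, zero_le_one, one_mem M hM γ hγ0 hγ1 μ ν⟩ ?_
  rintro ε ⟨hε, hbis⟩
  exact key M γ hγ0 n ε μ ν hε hbis
end

section
/- For MDP-like lifting of metrics via weight functions: if λ ∈ μ⊗ν is a weight function coupling distributions μ and ν, and d_n is the n-th iterate of the state-based metric functional, then d_AP(μ,ν) ≤ d_n(μ,ν) for all n ≥ 1, where d_n(μ,ν) = min_{λ∈μ⊗ν} Σ_{s,t} λ(s,t)·d_n(s,t). -/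
open Finset

/-- Weight functions coupling μ and ν (λ ∈ μ⊗ν). -/
def IsWeight {S : Type} [Fintype S] (μ ν : ProbDist S) (lam : S → S → ℝ) : Prop :=
  (∀ s t, 0 ≤ lam s t) ∧ (∀ t, ∑ s, lam s t = ν.f t) ∧ (∀ s, ∑ t, lam s t = μ.f s)

/-- Lifting of a metric on states to distributions via optimal couplings. -/
noncomputable def liftD {S : Type} [Fintype S] (d : S → S → ℝ) (μ ν : ProbDist S) : ℝ :=
  sInf {x | ∃ lam, IsWeight μ ν lam ∧ x = ∑ s, ∑ t, lam s t * d s t}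

/-- The state-based (game) metric functional f. -/
noncomputable def ff {S Act AP : Type} [Fintype S] [Fintype AP] [DecidableEq AP]
    (M : PA S Act AP) (γ : ℝ) (d : S → S → ℝ) (s t : S) : ℝ :=
  max (if M.L s = M.L t then 0 else 1)
    (⨆ a : Act,
      max (⨆ μ ∈ {x | Combined M s a x}, ⨅ ν ∈ {x | Combined M t a x}, γ * liftD d μ ν)
          (⨆ ν ∈ {x | Combined M t a x}, ⨅ μ ∈ {x | Combined M s a x}, γ * liftD d μ ν))

/-!
For any coupling `λ ∈ μ⊗ν`, `μ(A) − ν(A) = Σ λ(s,t) ([L s = A] − [L t = A])`. Summing absolute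
values over `A`, a pair `(s,t)` contributes `2 λ(s,t)` if `L s ≠ L t` and nothing otherwise, so
`d_AP(μ,ν) ≤ Σ λ(s,t) (1 − δ_{L s, L t})`. Since `f(d)` dominates the label mismatch
`1 − δ_{L s, L t}` pointwise, so does every `d_n` with `n ≥ 1`, and minimising over `λ` gives
`d_AP(μ,ν) ≤ d_n(μ,ν)`.
-/

section Coupling

variable {S AP : Type} [Fintype S] {μ ν : ProbDist S} {lam : S → S → ℝ}

theorem pOf_eq_sum_mul_ite [DecidableEq AP] (L : S → Finset AP) (μ : ProbDist S)
    (A : Finset AP) : pOf L μ A = ∑ s, μ.f s * if L s = A then 1 else 0 := by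
  simp [pOf, ProbDist.pr, Set.indicator_apply]

theorem IsWeight.pOf_left [DecidableEq AP] (h : IsWeight μ ν lam) (L : S → Finset AP)
    (A : Finset AP) : pOf L μ A = ∑ s, ∑ t, lam s t * if L s = A then 1 else 0 := by
  simp only [pOf_eq_sum_mul_ite, ← sum_mul, h.2.2]

theorem IsWeight.pOf_right [DecidableEq AP] (h : IsWeight μ ν lam) (L : S → Finset AP)
    (A : Finset AP) : pOf L ν A = ∑ s, ∑ t, lam s t * if L t = A then 1 else 0 := by
  rw [sum_comm]
  simp only [pOf_eq_sum_mul_ite, ← sum_mul, h.2.1]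

theorem IsWeight.abs_pOf_sub_le [DecidableEq AP] (h : IsWeight μ ν lam) (L : S → Finset AP)
    (A : Finset AP) :
    |pOf L μ A - pOf L ν A| ≤
      ∑ s, ∑ t, lam s t * |(if L s = A then 1 else 0) - if L t = A then 1 else 0| :=
  calc |pOf L μ A - pOf L ν A|
      = |∑ s, ∑ t, lam s t * ((if L s = A then 1 else 0) - if L t = A then 1 else 0)| := by
        simp only [h.pOf_left, h.pOf_right, mul_sub, sum_sub_distrib]
    _ ≤ ∑ s, ∑ t, |lam s t * ((if L s = A then 1 else 0) - if L t = A then 1 else 0)| :=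
        (abs_sum_le_sum_abs _ _).trans (sum_le_sum fun s _ => abs_sum_le_sum_abs _ _)
    _ = _ := by simp only [abs_mul, abs_of_nonneg (h.1 _ _)]

theorem sum_abs_ite_sub_ite {α : Type*} [Fintype α] [DecidableEq α] (a b : α) :
    ∑ x, |(if a = x then (1 : ℝ) else 0) - if b = x then 1 else 0| =
      2 * if a = b then 0 else 1 := by
  by_cases hab : a = b
  · simp [hab]
  · have hsplit : ∀ x, |(if a = x then (1 : ℝ) else 0) - if b = x then 1 else 0| =
        (if a = x then 1 else 0) + if b = x then 1 else 0 := by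
      intro x
      by_cases hax : a = x <;> by_cases hbx : b = x
      · exact absurd (hax.trans hbx.symm) hab
      all_goals simp [hax, hbx]
    simp only [hsplit, sum_add_distrib, sum_ite_eq, mem_univ, if_true, hab, if_false]
    norm_num

theorem IsWeight.dAP_le [Fintype AP] [DecidableEq AP] (h : IsWeight μ ν lam)
    (L : S → Finset AP) :
    dAP L μ ν ≤ ∑ s, ∑ t, lam s t * if L s = L t then 0 else 1 :=
  calc dAP L μ ν
      ≤ 1 / 2 * ∑ A, ∑ s, ∑ t, lam s t *
          |(if L s = A then 1 else 0) - if L t = A then 1 else 0| := by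
        unfold dAP
        gcongr with A
        exact h.abs_pOf_sub_le L A
    _ = _ := by
        rw [sum_comm]
        simp only [sum_comm (γ := Finset AP), ← mul_sum, sum_abs_ite_sub_ite]
        simp only [mul_sum]
        ring_nf

theorem isWeight_mul (μ ν : ProbDist S) : IsWeight μ ν fun s t => μ.f s * ν.f t :=
  ⟨fun s t => mul_nonneg (μ.nonneg s) (ν.nonneg t),
    fun t => by rw [← sum_mul, μ.sum_one, one_mul],
    fun s => by rw [← mul_sum, ν.sum_one, mul_one]⟩

theorem le_liftD {d : S → S → ℝ} {c : ℝ}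
    (h : ∀ lam, IsWeight μ ν lam → c ≤ ∑ s, ∑ t, lam s t * d s t) : c ≤ liftD d μ ν :=
  le_csInf ⟨_, _, isWeight_mul μ ν, rfl⟩ fun _ ⟨lam, hw, hx⟩ => hx ▸ h lam hw

theorem dAP_le_liftD [Fintype AP] [DecidableEq AP] (L : S → Finset AP) {d : S → S → ℝ}
    (hd : ∀ s t, (if L s = L t then 0 else 1) ≤ d s t) : dAP L μ ν ≤ liftD d μ ν :=
  le_liftD fun _ hw => (hw.dAP_le L).trans <|
    sum_le_sum fun s _ => sum_le_sum fun t _ => mul_le_mul_of_nonneg_left (hd s t) (hw.1 s t)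

end Coupling

theorem ite_le_ff {S Act AP : Type} [Fintype S] [Fintype AP] [DecidableEq AP]
    (M : PA S Act AP) (γ : ℝ) (d : S → S → ℝ) (s t : S) :
    (if M.L s = M.L t then 0 else 1) ≤ ff M γ d s t :=
  le_max_left _ _

theorem stmt18_general {S Act AP : Type} [Fintype S] [Fintype AP] [DecidableEq AP]
    (M : PA S Act AP) (γ : ℝ)
    (n : ℕ) (hn : 1 ≤ n) (μ ν : ProbDist S) :
    dAP M.L μ ν ≤ liftD ((ff M γ)^[n] (fun _ _ => (0 : ℝ))) μ ν := by
  obtain ⟨m, rfl⟩ := Nat.exists_eq_add_of_le' hn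
  refine dAP_le_liftD M.L fun s t => ?_
  rw [Function.iterate_succ_apply']
  exact ite_le_ff M γ _ s t

theorem stmt18 {S Act AP : Type} [Fintype S] [Fintype Act] [Fintype AP] [DecidableEq AP]
    (M : PA S Act AP) (hM : M.InputEnabled) (γ : ℝ) (hγ0 : 0 < γ) (hγ1 : γ ≤ 1)
    (n : ℕ) (hn : 1 ≤ n) (μ ν : ProbDist S) :
    dAP M.L μ ν ≤ liftD ((ff M γ)^[n] (fun _ _ => (0 : ℝ))) μ ν :=
  stmt18_general M γ n hn μ ν
end
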